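/- Let R be a regular local ring with maximal ideal n and residue field k such that every element of k has a square root in k. Let x₁, …, x_h be a minimal generating set of n, 1 ≤ τ < h, s ≥ 2, units u_{τ+1}, …, u_h of R, and let I(u) = ({x_i x_j}_{1≤i<j≤h}, {x_j²}_{2≤j≤τ}, {x_i² − u_i x₁^s}_{τ+1≤i≤h}). Then there exists a minimal generating set y₁, …, y_h of n such that I(u) = ({y_i y_j}_{1≤i<j≤h}, {y_j²}_{2≤j≤τ}, {y_i² − y₁^s}_{τ+1≤i≤h}). -/

import Mathlib

open IsLocalRing

/-! Rescaling `x_i` by a unit `e_i` with `e_i² u_i ≡ 1 (mod n)` (and `e_1 = 1`) changes the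
generator `x_i² - u_i x₁^s` by `(e_i² u_i - 1) x₁^s ∈ n x₁^s`. Both ideals contain `n x₁^s`:
`x₁^s x_j = x₁^(s-1) (x₁ x_j)` for `j ≥ 2`, and
`u_h x₁^(s+1) = x_h (x₁ x_h) - x₁ (x_h² - u_h x₁^s)`. Hence each ideal contains the generators
of the other. Square roots are only needed in the residue field, not modulo `I(u)`. -/

section StretchedIdeal

variable {R : Type*} [CommRing R] (h τ s : ℕ)

def stretchedIdeal (x w : ℕ → R) : Ideal R :=
  Ideal.span
    ({p | ∃ i j, 1 ≤ i ∧ i < j ∧ j ≤ h ∧ p = x i * x j} ∪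
     {p | ∃ j, 2 ≤ j ∧ j ≤ τ ∧ p = x j ^ 2} ∪
     {p | ∃ i, τ + 1 ≤ i ∧ i ≤ h ∧ p = x i ^ 2 - w i * x 1 ^ s})

variable {h τ s}

theorem stretchedIdeal_le_iff {x w : ℕ → R} {K : Ideal R} :
    stretchedIdeal h τ s x w ≤ K ↔
      (∀ i j, 1 ≤ i → i < j → j ≤ h → x i * x j ∈ K) ∧
      (∀ j, 2 ≤ j → j ≤ τ → x j ^ 2 ∈ K) ∧
      (∀ i, τ + 1 ≤ i → i ≤ h → x i ^ 2 - w i * x 1 ^ s ∈ K) := by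
  simp only [stretchedIdeal, Ideal.span_le, Set.union_subset_iff, Set.ofPred_subset]
  constructor
  · rintro ⟨⟨hij, hsq⟩, hst⟩
    exact ⟨fun i j h₁ h₂ h₃ => hij _ ⟨i, j, h₁, h₂, h₃, rfl⟩,
      fun j h₁ h₂ => hsq _ ⟨j, h₁, h₂, rfl⟩, fun i h₁ h₂ => hst _ ⟨i, h₁, h₂, rfl⟩⟩
  · rintro ⟨hij, hsq, hst⟩
    refine ⟨⟨?_, ?_⟩, ?_⟩
    · rintro _ ⟨i, j, h₁, h₂, h₃, rfl⟩
      exact hij i j h₁ h₂ h₃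
    · rintro _ ⟨j, h₁, h₂, rfl⟩
      exact hsq j h₁ h₂
    · rintro _ ⟨i, h₁, h₂, rfl⟩
      exact hst i h₁ h₂

theorem stretchedIdeal_one (x : ℕ → R) :
    stretchedIdeal h τ s x 1 = Ideal.span
      ({p | ∃ i j, 1 ≤ i ∧ i < j ∧ j ≤ h ∧ p = x i * x j} ∪
       {p | ∃ j, 2 ≤ j ∧ j ≤ τ ∧ p = x j ^ 2} ∪
       {p | ∃ i, τ + 1 ≤ i ∧ i ≤ h ∧ p = x i ^ 2 - x 1 ^ s}) := by
  simp only [stretchedIdeal, Pi.one_apply, one_mul]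

theorem mul_pow_mem_stretchedIdeal {x w : ℕ → R} (h₁ : 1 < h) (hτh : τ < h) (hs : 1 ≤ s)
    (hw : IsUnit (w h)) {m : R} (hm : m ∈ Ideal.span (x '' Set.Icc 1 h)) :
    m * x 1 ^ s ∈ stretchedIdeal h τ s x w := by
  obtain ⟨hij, -, hst⟩ := stretchedIdeal_le_iff.1 (le_refl (stretchedIdeal h τ s x w))
  induction hm using Submodule.span_induction with
  | mem _ hm =>
    obtain ⟨i, ⟨hi₁, hih⟩, rfl⟩ := hm
    obtain rfl | hi₁ := hi₁.eq_or_lt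
    · rw [← Ideal.unit_mul_mem_iff_mem _ hw]
      have hpow : w h * (x 1 * x 1 ^ s)
          = x h * (x 1 * x h) - x 1 * (x h ^ 2 - w h * x 1 ^ s) := by ring
      rw [hpow]
      exact sub_mem (Ideal.mul_mem_left _ _ (hij 1 h le_rfl h₁ le_rfl))
        (Ideal.mul_mem_left _ _ (hst h hτh le_rfl))
    · obtain ⟨t, rfl⟩ := Nat.exists_eq_add_of_le' hs
      rw [show x i * x 1 ^ (t + 1) = x 1 ^ t * (x 1 * x i) by ring]
      exact Ideal.mul_mem_left _ _ (hij 1 i le_rfl hi₁ hih)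
  | zero => simp
  | add _ _ _ _ ha hb => rw [add_mul]; exact add_mem ha hb
  | smul a _ _ ha => rw [smul_eq_mul, mul_assoc]; exact Ideal.mul_mem_left _ a ha

theorem stretchedIdeal_rescale_le {x w w' e : ℕ → R} {M : Ideal R} (he₁ : e 1 = 1)
    (hM : ∀ m ∈ M, m * x 1 ^ s ∈ stretchedIdeal h τ s x w)
    (hew : ∀ i, τ + 1 ≤ i → i ≤ h → e i ^ 2 * w i - w' i ∈ M) :
    stretchedIdeal h τ s (fun i => e i * x i) w' ≤ stretchedIdeal h τ s x w := by
  obtain ⟨hij, hsq, hst⟩ := stretchedIdeal_le_iff.1 (le_refl (stretchedIdeal h τ s x w))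
  refine stretchedIdeal_le_iff.2 ⟨fun i j h₁ h₂ h₃ => ?_, fun j h₁ h₂ => ?_, fun i h₁ h₂ => ?_⟩
  · rw [mul_mul_mul_comm]
    exact Ideal.mul_mem_left _ _ (hij i j h₁ h₂ h₃)
  · rw [mul_pow]
    exact Ideal.mul_mem_left _ _ (hsq j h₁ h₂)
  · have hsplit : (e i * x i) ^ 2 - w' i * (e 1 * x 1) ^ s
        = e i ^ 2 * (x i ^ 2 - w i * x 1 ^ s) + (e i ^ 2 * w i - w' i) * x 1 ^ s := by
      rw [he₁]; ring
    rw [hsplit]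
    exact add_mem (Ideal.mul_mem_left _ _ (hst i h₁ h₂)) (hM _ (hew i h₁ h₂))

end StretchedIdeal

theorem Ideal.span_image_mul_le {R ι : Type*} [CommRing R] (e x : ι → R) (S : Set ι) :
    Ideal.span ((fun i => e i * x i) '' S) ≤ Ideal.span (x '' S) :=
  Ideal.span_le.2 <| by
    rintro _ ⟨i, hi, rfl⟩
    exact Ideal.mul_mem_left _ _ (Ideal.subset_span (Set.mem_image_of_mem x hi))

theorem Units.inv_sq_sub_mem {R : Type*} [CommRing R] {M : Ideal R} (a : Rˣ) {u : R}
    (ha : (a : R) ^ 2 * u - 1 ∈ M) : ((a⁻¹ : Rˣ) : R) ^ 2 - u ∈ M := by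
  have hsplit : ((a⁻¹ : Rˣ) : R) ^ 2 - u = -((a⁻¹ : Rˣ) : R) ^ 2 * ((a : R) ^ 2 * u - 1) := by
    linear_combination u * (((a⁻¹ : Rˣ) : R) * a + 1) * a.inv_mul
  rw [hsplit]
  exact M.mul_mem_left _ ha

theorem IsLocalRing.exists_unit_sq_mul_sub_one_mem {R : Type*} [CommRing R] [IsLocalRing R]
    (hsqrt : ∀ b : ResidueField R, ∃ c : ResidueField R, c ^ 2 = b) {u : R} (hu : IsUnit u) :
    ∃ v : Rˣ, (v : R) ^ 2 * u - 1 ∈ maximalIdeal R := by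
  have hu₀ : residue R u ≠ 0 := (residue_ne_zero_iff_isUnit u).2 hu
  obtain ⟨c, hc⟩ := hsqrt (residue R u)⁻¹
  obtain ⟨v, rfl⟩ := residue_surjective c
  have hv : IsUnit v := by
    refine (residue_ne_zero_iff_isUnit v).1 fun hv₀ => ?_
    rw [hv₀, zero_pow two_ne_zero, eq_comm, inv_eq_zero] at hc
    exact hu₀ hc
  refine ⟨hv.unit, (residue_eq_zero_iff _).1 ?_⟩
  rw [IsUnit.unit_spec, map_sub, map_mul, map_pow, hc, inv_mul_cancel₀ hu₀, map_one, sub_self]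

theorem stretched_units_normalization
    (R : Type*) [CommRing R] [IsLocalRing R]
    (hsqrt : ∀ b : ResidueField R, ∃ c : ResidueField R, c ^ 2 = b)
    (h τ s : ℕ) (hτ : 1 ≤ τ) (hτh : τ < h) (hs : 2 ≤ s)
    (x u : ℕ → R) (hu : ∀ i, τ + 1 ≤ i → i ≤ h → IsUnit (u i))
    (hgen : maximalIdeal R = Ideal.span ((fun i => x i) '' Set.Icc 1 h))
    (I : Ideal R)
    (hI : I = Ideal.span
      ({p | ∃ i j, 1 ≤ i ∧ i < j ∧ j ≤ h ∧ p = x i * x j} ∪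
       {p | ∃ j, 2 ≤ j ∧ j ≤ τ ∧ p = x j ^ 2} ∪
       {p | ∃ i, τ + 1 ≤ i ∧ i ≤ h ∧ p = x i ^ 2 - u i * x 1 ^ s})) :
    ∃ y : ℕ → R,
      maximalIdeal R = Ideal.span ((fun i => y i) '' Set.Icc 1 h) ∧
      I = Ideal.span
        ({p | ∃ i j, 1 ≤ i ∧ i < j ∧ j ≤ h ∧ p = y i * y j} ∪
         {p | ∃ j, 2 ≤ j ∧ j ≤ τ ∧ p = y j ^ 2} ∪
         {p | ∃ i, τ + 1 ≤ i ∧ i ≤ h ∧ p = y i ^ 2 - y 1 ^ s}) := by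
  have hroot : ∀ i, ∃ v : Rˣ, (i = 1 → v = 1) ∧
      (τ + 1 ≤ i → i ≤ h → (v : R) ^ 2 * u i - 1 ∈ maximalIdeal R) := by
    intro i
    by_cases hi : τ + 1 ≤ i ∧ i ≤ h
    · obtain ⟨v, hv⟩ := exists_unit_sq_mul_sub_one_mem hsqrt (hu i hi.1 hi.2)
      exact ⟨v, by omega, fun _ _ => hv⟩
    · exact ⟨1, fun _ => rfl, fun h₁ h₂ => absurd ⟨h₁, h₂⟩ hi⟩
  choose e he₁ he using hroot
  set y : ℕ → R := fun i => e i * x i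
  have hx : (fun i => ((e i)⁻¹ : Rˣ) * y i) = x := funext fun i => (e i).inv_mul_cancel_left _
  have hgen' : maximalIdeal R = Ideal.span (y '' Set.Icc 1 h) :=
    hgen.trans <| le_antisymm (hx ▸ Ideal.span_image_mul_le _ y _) (Ideal.span_image_mul_le _ x _)
  have hmulI : ∀ m ∈ maximalIdeal R, m * x 1 ^ s ∈ stretchedIdeal h τ s x u := fun m hm =>
    mul_pow_mem_stretchedIdeal (by omega) hτh (by omega) (hu h hτh le_rfl) (hgen ▸ hm)
  have hmulJ : ∀ m ∈ maximalIdeal R, m * y 1 ^ s ∈ stretchedIdeal h τ s y 1 := fun m hm =>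
    mul_pow_mem_stretchedIdeal (by omega) hτh (by omega) isUnit_one (hgen' ▸ hm)
  have hinv : ∀ i, τ + 1 ≤ i → i ≤ h →
      (((e i)⁻¹ : Rˣ) : R) ^ 2 * (1 : ℕ → R) i - u i ∈ maximalIdeal R := fun i h₁ h₂ => by
    rw [Pi.one_apply, mul_one]
    exact (e i).inv_sq_sub_mem (he i h₁ h₂)
  refine ⟨y, hgen', ?_⟩
  rw [hI, ← stretchedIdeal_one]
  exact le_antisymm (hx ▸ stretchedIdeal_rescale_le (by simp [he₁ 1 rfl]) hmulJ hinv)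
    (stretchedIdeal_rescale_le (by simp [he₁ 1 rfl]) hmulI he)
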